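/- arXiv:2310.05249 — 3 statements merged into one kernel-verified Lean document; each statement's English description precedes it below -/
import Mathlib

section
/- Let a_1,…,a_K ≥ 0 sum to 1 and fix indices k ≠ n. Then ∑_{m≠k} a_m^2 − a_n − a_k(1 − a_k) ≤ −(1 − a_k)·(a_k − max_{m≠k} a_m). Consequently, if a_k > max_{m≠k} a_m then ∑_{m≠k} a_m^2 − a_n − a_k(1 − a_k) < 0 whenever a_k < 1. -/
open Finset

/-- The factor appearing in the off-target gradient `β_{k,n}` is bounded above by
`−(1 − a_k)(a_k − max_{m≠k} a_m)`; consequently it is negative when `a_k` strictly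
dominates all other coordinates and `a_k < 1`. -/
theorem beta_factor_upper_bound {K : ℕ} (hK : 2 ≤ K) (a : Fin K → ℝ)
    (ha : ∀ m, 0 ≤ a m) (hsum : ∑ m, a m = 1) (k n : Fin K) (hkn : k ≠ n) :
    ((∑ m ∈ Finset.univ.erase k, (a m) ^ 2) - a n - a k * (1 - a k)
      ≤ -((1 - a k) * (a k -
        (Finset.univ.erase k).sup' (by
          rw [← Finset.card_pos, Finset.card_erase_of_mem (Finset.mem_univ k),
            Finset.card_univ, Fintype.card_fin]; omega) a))) ∧
    (a k > (Finset.univ.erase k).sup' (by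
          rw [← Finset.card_pos, Finset.card_erase_of_mem (Finset.mem_univ k),
            Finset.card_univ, Fintype.card_fin]; omega) a →
      a k < 1 →
      (∑ m ∈ Finset.univ.erase k, (a m) ^ 2) - a n - a k * (1 - a k) < 0) := by

  have hS : (Finset.univ.erase k).Nonempty := by
    rw [← Finset.card_pos, Finset.card_erase_of_mem (Finset.mem_univ k),
      Finset.card_univ, Fintype.card_fin]; omega
  set S := Finset.univ.erase k with hSdef
  set M := S.sup' hS a with hMdef
  have hM : ∀ m ∈ S, a m ≤ M := fun m hm => Finset.le_sup' a hm
  obtain ⟨m0, hm0⟩ := hS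
  have hM0 : 0 ≤ M := le_trans (ha m0) (hM m0 hm0)
  have hsplit : a k + ∑ m ∈ S, a m = 1 := by
    rw [hSdef, Finset.add_sum_erase _ a (Finset.mem_univ k)]; exact hsum
  have hsq : ∑ m ∈ S, (a m) ^ 2 ≤ M * (1 - a k) := by
    have : ∑ m ∈ S, (a m) ^ 2 ≤ ∑ m ∈ S, M * a m := by
      apply Finset.sum_le_sum
      intro m hm
      have := hM m hm
      nlinarith [ha m]
    rw [← Finset.mul_sum] at this
    have h1 : ∑ m ∈ S, a m = 1 - a k := by linarith
    rw [h1] at this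
    exact this
  have han : 0 ≤ a n := ha n
  constructor
  · nlinarith
  · intro h1 h2
    nlinarith
end

section
/- Let a_1,…,a_K ≥ 0 sum to 1 and fix distinct indices k, n with n ≠ 1 and k ≠ 1. Then ∑_{m≠k} a_m^2 − a_1 − a_k(1 − a_k) ≤ −(1 − a_k − a_1)·(a_1 + a_k − max_{m≠1,k} a_m). -/
open Finset

/-- Key inequality controlling the decrease of the bilinear weight `B_{k,1}` between
an under-represented feature `k` and the dominant feature `1` (index `i1` here). -/
theorem beta_k1_factor_upper_bound {K : ℕ} (hK : 3 ≤ K) (a : Fin K → ℝ)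
    (ha : ∀ m, 0 ≤ a m) (hsum : ∑ m, a m = 1) (i1 k n : Fin K)
    (hi1 : (i1 : ℕ) = 0) (hkn : k ≠ n) (hk1 : k ≠ i1) (hn1 : n ≠ i1) :
    (∑ m ∈ Finset.univ.erase k, (a m) ^ 2) - a i1 - a k * (1 - a k)
      ≤ -((1 - a k - a i1) * (a i1 + a k -
        ((Finset.univ.erase i1).erase k).sup' (by
          rw [← Finset.card_pos, Finset.card_erase_of_mem
              (Finset.mem_erase.mpr ⟨hk1, Finset.mem_univ k⟩),
            Finset.card_erase_of_mem (Finset.mem_univ i1),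
            Finset.card_univ, Fintype.card_fin]; omega) a)) := by
  set T := (Finset.univ.erase i1).erase k with hT
  have hTne : T.Nonempty := by
    rw [← Finset.card_pos, hT, Finset.card_erase_of_mem
        (Finset.mem_erase.mpr ⟨hk1, Finset.mem_univ k⟩),
      Finset.card_erase_of_mem (Finset.mem_univ i1),
      Finset.card_univ, Fintype.card_fin]; omega
  set M := T.sup' hTne a with hM
  have hle : ∀ m ∈ T, a m ≤ M := fun m hm => Finset.le_sup' a hm
  -- sums over T
  have hkmem : k ∈ Finset.univ.erase i1 := Finset.mem_erase.mpr ⟨hk1, Finset.mem_univ k⟩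
  have h1 : ∑ m ∈ T, a m + a k = ∑ m ∈ Finset.univ.erase i1, a m :=
    Finset.sum_erase_add _ _ hkmem
  have h2 : ∑ m ∈ Finset.univ.erase i1, a m + a i1 = 1 := by
    rw [Finset.sum_erase_add _ _ (Finset.mem_univ i1), hsum]
  have hTsum : ∑ m ∈ T, a m = 1 - a i1 - a k := by linarith
  have hcomm : (Finset.univ.erase k).erase i1 = T := by ext x; simp [hT, Finset.mem_erase, and_comm]
  have h3 : ∑ m ∈ T, (a m) ^ 2 + (a i1) ^ 2 = ∑ m ∈ Finset.univ.erase k, (a m) ^ 2 := by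
    rw [← hcomm]
    exact Finset.sum_erase_add _ _ (Finset.mem_erase.mpr ⟨fun h => hk1 h.symm, Finset.mem_univ i1⟩)
  have hsq : ∑ m ∈ T, (a m) ^ 2 ≤ M * ∑ m ∈ T, a m := by
    rw [Finset.mul_sum]
    refine Finset.sum_le_sum fun m hm => ?_
    have := ha m
    nlinarith [hle m hm]
  have h0 : 0 ≤ a i1 := ha i1
  have hk0 : 0 ≤ a k := ha k
  rw [hTsum] at hsq
  nlinarith [hsq]
end

section
/- Define L_low = (1/2)(1 + 1/(K−1)) ∑_{k=1}^K P(x_query = v_k and |V_k| = 0), where |V_k| is the number of the N i.i.d. input tokens equal to v_k and x_query is independently sampled from the same distribution. Then for any parameter θ, the population loss L(θ) = (1/2)∑_k E[1{x_query = v_k}(∑_{m≠k} Attn_m² + (1 − Attn_k)²)] satisfies L(θ) ≥ L_low. -/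
open Finset MeasureTheory

/-!
On the event `|V_k| = 0` the attention vector is a probability vector with `Attn_k = 0`, so
Cauchy–Schwarz gives `∑_{m ≠ k} Attn_m² ≥ 1/(K-1)` while `(1 - Attn_k)² = 1`: the loss there is at
least `1 + 1/(K-1)`. The loss is nonnegative everywhere, so Markov's inequality bounds its
expectation on `{x_query = k}` below by `(1 + 1/(K-1)) P(x_query = k, |V_k| = 0)`.
-/

/-- Squared distance from the vector `p` to the `k`-th standard basis vector. -/
def sqDistBasis {ι : Type*} [Fintype ι] [DecidableEq ι] (p : ι → ℝ) (k : ι) : ℝ :=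
  (∑ m ∈ univ.erase k, p m ^ 2) + (1 - p k) ^ 2

section SqDistBasis

variable {ι : Type*} [Fintype ι] [DecidableEq ι]

theorem sqDistBasis_nonneg (p : ι → ℝ) (k : ι) : 0 ≤ sqDistBasis p k := by
  unfold sqDistBasis
  positivity

theorem one_div_card_sub_one_le_sum_sq_erase {p : ι → ℝ} (hsum : ∑ m, p m = 1) {k : ι}
    (hk : p k = 0) : 1 / ((Fintype.card ι : ℝ) - 1) ≤ ∑ m ∈ univ.erase k, p m ^ 2 := by
  have hrest : ∑ m ∈ univ.erase k, p m = 1 := by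
    rw [← add_sum_erase _ _ (mem_univ k), hk, zero_add] at hsum
    exact hsum
  have hcard : ((univ.erase k).card : ℝ) = (Fintype.card ι : ℝ) - 1 := by
    rw [card_erase_of_mem (mem_univ k), card_univ, Nat.cast_sub (Fintype.card_pos_iff.mpr ⟨k⟩),
      Nat.cast_one]
  have hCS := sq_sum_le_card_mul_sum_sq (s := univ.erase k) (f := p)
  rw [hrest, hcard, one_pow] at hCS
  exact div_le_of_le_mul₀ (by rw [← hcard]; positivity) (sum_nonneg fun _ _ ↦ sq_nonneg _)
    (by linarith)

theorem one_add_one_div_card_sub_one_le_sqDistBasis {p : ι → ℝ} (hsum : ∑ m, p m = 1) {k : ι}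
    (hk : p k = 0) : 1 + 1 / ((Fintype.card ι : ℝ) - 1) ≤ sqDistBasis p k := by
  have := one_div_card_sub_one_le_sum_sq_erase hsum hk
  rw [sqDistBasis, hk]
  linarith

end SqDistBasis

theorem mul_measureReal_le_integral_of_forall_mem_le {α : Type*} [MeasurableSpace α]
    {μ : Measure α} [IsFiniteMeasure μ] {f : α → ℝ} (hf_nonneg : 0 ≤ f) (hf : Integrable f μ)
    {c : ℝ} {A : Set α} (hA : ∀ x ∈ A, c ≤ f x) : c * μ.real A ≤ ∫ x, f x ∂μ := by
  rcases le_total 0 c with hc | hc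
  · exact (mul_le_mul_of_nonneg_left (measureReal_mono hA) hc).trans
      (mul_meas_ge_le_integral_of_nonneg (ae_of_all _ hf_nonneg) hf c)
  · exact (mul_nonpos_of_nonpos_of_nonneg hc measureReal_nonneg).trans (integral_nonneg hf_nonneg)

theorem population_loss_lower_bound_general {Ω : Type*} [MeasurableSpace Ω]
    (μ : Measure Ω) [IsProbabilityMeasure μ] {K : ℕ}
    (xq : Ω → Fin K)
    (Vzero : Fin K → Set Ω)
    (Attn : Fin K → Ω → ℝ)
    (hsum : ∀ ω, ∑ m, Attn m ω = 1)
    (hzero : ∀ k ω, ω ∈ Vzero k → Attn k ω = 0)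
    (hInt : ∀ k : Fin K, Integrable (fun ω =>
      Set.indicator {ω' | xq ω' = k}
        (fun ω' => (∑ m ∈ Finset.univ.erase k, (Attn m ω') ^ 2)
          + (1 - Attn k ω') ^ 2) ω) μ) :
    (1 / 2) * ∑ k : Fin K, ∫ ω,
        Set.indicator {ω' | xq ω' = k}
          (fun ω' => (∑ m ∈ Finset.univ.erase k, (Attn m ω') ^ 2)
            + (1 - Attn k ω') ^ 2) ω ∂μ
      ≥ (1 / 2) * (1 + 1 / ((K : ℝ) - 1)) *
          ∑ k : Fin K, (μ ({ω | xq ω = k} ∩ Vzero k)).toReal := by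
  rw [ge_iff_le, mul_assoc]
  gcongr
  rw [mul_sum]
  gcongr with k
  have hloss : ∀ ω ∈ {ω | xq ω = k} ∩ Vzero k, 1 + 1 / ((K : ℝ) - 1) ≤
      {ω' | xq ω' = k}.indicator (fun ω' ↦ sqDistBasis (Attn · ω') k) ω := by
    rintro ω ⟨hq, hV⟩
    rw [Set.indicator_of_mem hq]
    simpa using one_add_one_div_card_sub_one_le_sqDistBasis (hsum ω) (hzero k ω hV)
  refine mul_measureReal_le_integral_of_forall_mem_le
    (Set.indicator_nonneg fun ω _ ↦ sqDistBasis_nonneg _ k) (hInt k) hloss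

/-- The population loss is bounded below by the unavoidable error `L_low` coming from
prompts in which the query feature is absent from the input tokens. -/
theorem population_loss_lower_bound {Ω : Type*} [MeasurableSpace Ω]
    (μ : Measure Ω) [IsProbabilityMeasure μ] {K : ℕ} (hK : 2 ≤ K)
    (xq : Ω → Fin K) (hxq : Measurable xq)
    (Vzero : Fin K → Set Ω) (hV : ∀ k, MeasurableSet (Vzero k))
    (Attn : Fin K → Ω → ℝ)
    (hnn : ∀ ω m, 0 ≤ Attn m ω) (hsum : ∀ ω, ∑ m, Attn m ω = 1)
    (hzero : ∀ k ω, ω ∈ Vzero k → Attn k ω = 0)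
    (hInt : ∀ k : Fin K, Integrable (fun ω =>
      Set.indicator {ω' | xq ω' = k}
        (fun ω' => (∑ m ∈ Finset.univ.erase k, (Attn m ω') ^ 2)
          + (1 - Attn k ω') ^ 2) ω) μ) :
    (1 / 2) * ∑ k : Fin K, ∫ ω,
        Set.indicator {ω' | xq ω' = k}
          (fun ω' => (∑ m ∈ Finset.univ.erase k, (Attn m ω') ^ 2)
            + (1 - Attn k ω') ^ 2) ω ∂μ
      ≥ (1 / 2) * (1 + 1 / ((K : ℝ) - 1)) *
          ∑ k : Fin K, (μ ({ω | xq ω = k} ∩ Vzero k)).toReal :=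
  population_loss_lower_bound_general μ xq Vzero Attn hsum hzero hInt
end
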